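/- arXiv:1506.04497 — 3 statements merged into one kernel-verified Lean document; each statement's English description precedes it below -/
import Mathlib

section
/- Let 0 < α₀ < α ≤ 1, let n be an odd positive integer, and Z ≥ 0. Then 0 ≤ (Z^α (log Z)^n − Z^{α₀} (log Z)^n)/(α − α₀), and for every C ≥ 1 with (α−α₀) log C < 1, (Z^α (log Z)^n − Z^{α₀} (log Z)^n)/(α − α₀) ≤ 1_{\{Z ≤ C\}} · (1/(1 − (α−α₀) log C)) · Z^{α₀} (log Z)^{n+1} + 1_{\{Z > C\}} · Z^α (log Z)^{n+1}. -/
open MeasureTheory Real Filter Set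

lemma exp_mul_one_sub_le' (t : ℝ) : Real.exp t * (1 - t) ≤ 1 := by
  have h := Real.add_one_le_exp (-t)
  calc Real.exp t * (1 - t) ≤ Real.exp t * Real.exp (-t) := by
        apply mul_le_mul_of_nonneg_left _ (Real.exp_nonneg t)
        linarith
    _ = 1 := by rw [← Real.exp_add]; simp

/-- difference-quotient bounds, odd case. -/
theorem diff_quotient_bounds_odd
    (α₀ α : ℝ) (h0 : 0 < α₀) (h01 : α₀ < α) (h1 : α ≤ 1)
    (n : ℕ) (hn : Odd n) (Z : ℝ) (hZ : 0 ≤ Z) :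
    0 ≤ (Z ^ α * Real.log Z ^ n - Z ^ α₀ * Real.log Z ^ n) / (α - α₀) ∧
    ∀ C : ℝ, 1 ≤ C → (α - α₀) * Real.log C < 1 →
      (Z ^ α * Real.log Z ^ n - Z ^ α₀ * Real.log Z ^ n) / (α - α₀) ≤
        (if Z ≤ C then
          (1 / (1 - (α - α₀) * Real.log C)) * (Z ^ α₀ * Real.log Z ^ (n + 1))
        else Z ^ α * Real.log Z ^ (n + 1)) := by
  obtain ⟨k, hk⟩ := hn
  subst hk
  rcases eq_or_lt_of_le hZ with hZ0 | hZpos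
  · -- Z = 0
    have hZ0' : Z = 0 := hZ0.symm
    subst hZ0'
    rw [Real.zero_rpow (by linarith), Real.zero_rpow (by linarith), Real.log_zero]
    constructor
    · simp
    · intro C hC hsC
      have hC0 : (0:ℝ) ≤ C := by linarith
      simp [hC0, zero_pow]
  · -- Z > 0
    set δ : ℝ := α - α₀ with hδdef
    have hδ : 0 < δ := by simp [hδdef]; linarith
    set L : ℝ := Real.log Z with hLdef
    set t : ℝ := δ * L with htdef
    have hZα : Z ^ α = Z ^ α₀ * Real.exp t := by
      rw [show α = α₀ + δ by simp [hδdef], Real.rpow_add hZpos]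
      congr 1
      rw [Real.rpow_def_of_pos hZpos, htdef, hLdef, mul_comm]
    have hA : (0:ℝ) ≤ Z ^ α₀ * (L ^ 2) ^ k :=
      mul_nonneg (Real.rpow_nonneg hZ _) (pow_nonneg (sq_nonneg L) k)
    have hkey : 0 ≤ (Real.exp t - 1) * L := by
      rcases le_or_gt 0 L with hL | hL
      · have ht : 0 ≤ t := mul_nonneg hδ.le hL
        have := Real.one_le_exp ht
        nlinarith
      · have ht : t ≤ 0 := mul_nonpos_of_nonneg_of_nonpos hδ.le hL.le
        have := Real.exp_le_one_iff.mpr ht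
        nlinarith
    have hrw : (Z ^ α * L ^ (2 * k + 1) - Z ^ α₀ * L ^ (2 * k + 1)) / δ
        = Z ^ α₀ * (L ^ 2) ^ k * ((Real.exp t - 1) * L) / δ := by
      rw [hZα]; ring_nf
    constructor
    · rw [hrw]
      exact div_nonneg (mul_nonneg hA hkey) hδ.le
    · intro C hC hsC
      have hlogC : 0 ≤ Real.log C := Real.log_nonneg hC
      by_cases hZC : Z ≤ C
      · simp only [hZC, if_true]
        set s : ℝ := δ * Real.log C with hsdef
        have hs0 : 0 ≤ s := mul_nonneg hδ.le hlogC
        have hs1 : s < 1 := hsC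
        have h1s : 0 < 1 - s := by linarith
        have key2 : (Real.exp t - 1) * L * (1 - s) ≤ δ * L ^ 2 := by
          rcases le_or_gt L 0 with hL | hL
          · have ht : t ≤ 0 := mul_nonpos_of_nonneg_of_nonpos hδ.le hL
            have h1 := Real.add_one_le_exp t
            -- (exp t - 1) * L ≤ t * L = δ L², and (exp t -1)*L ≥ 0
            nlinarith [hkey]
          · have hts : t ≤ s := by
              have := Real.log_le_log hZpos hZC
              rw [htdef, hsdef]
              nlinarith
            have ht0 : 0 ≤ t := mul_nonneg hδ.le hL.le
            have he1 : 1 ≤ Real.exp t := Real.one_le_exp ht0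
            have hmain := exp_mul_one_sub_le' t
            -- (e^t - 1)(1 - t) ≤ t, and (e^t-1)(1-s) ≤ (e^t-1)(1-t)
            nlinarith [mul_le_mul_of_nonneg_right hmain hL.le,
              mul_nonneg (mul_nonneg (by linarith : (0:ℝ) ≤ Real.exp t - 1) (by linarith : (0:ℝ) ≤ s - t)) hL.le]
        have H := mul_le_mul_of_nonneg_left key2 hA
        rw [hrw, show (1 / (1 - s)) * (Z ^ α₀ * L ^ (2 * k + 1 + 1))
            = (Z ^ α₀ * (L ^ 2) ^ k * L ^ 2) / (1 - s) by field_simp; ring,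
          div_le_div_iff₀ hδ h1s]
        nlinarith [H]
      · simp only [hZC, if_false]
        push_neg at hZC
        have hL : 0 < L := Real.log_pos (by linarith)
        have ht0 : 0 ≤ t := mul_nonneg hδ.le hL.le
        have hmain := exp_mul_one_sub_le' t
        have key3 : (Real.exp t - 1) * L ≤ δ * (Real.exp t * L ^ 2) := by
          nlinarith [mul_le_mul_of_nonneg_right hmain hL.le]
        have H := mul_le_mul_of_nonneg_left key3 hA
        rw [hrw, hZα, show Z ^ α₀ * Real.exp t * L ^ (2 * k + 1 + 1)
            = Z ^ α₀ * (L ^ 2) ^ k * (Real.exp t * L ^ 2) by ring, div_le_iff₀ hδ]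
        nlinarith [H]
end

section
/- Let φ be a finite measure, f ≥ 0 measurable with ∫ f dφ < ∞, and define h(α) := ∫ f^α dφ for α ∈ [0,1]. Then for 0 < α₀ ≤ α < 1, |h(α) − h(α₀)| ≤ (α − α₀) · max( h(0)/(α₀ e), h(1)/((1−α) e) ). -/
open MeasureTheory Real Filter Set

lemma aux_ue (a u : ℝ) (ha : 0 < a) (hu : 0 ≤ u) :
    u * Real.exp (-(a * u)) ≤ 1 / (a * Real.exp 1) := by
  have key : (a * u) * Real.exp (-(a * u)) ≤ Real.exp (-1 : ℝ) := by
    have h1 : a * u ≤ Real.exp (a * u - 1) := by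
      have := Real.add_one_le_exp (a * u - 1); linarith
    calc (a * u) * Real.exp (-(a * u)) ≤ Real.exp (a * u - 1) * Real.exp (-(a * u)) := by
          exact mul_le_mul_of_nonneg_right h1 (Real.exp_pos _).le
      _ = Real.exp (-1 : ℝ) := by rw [← Real.exp_add]; ring_nf
  have he : Real.exp (-1 : ℝ) * Real.exp 1 = 1 := by
    rw [← Real.exp_add]; norm_num
  rw [le_div_iff₀ (by positivity)]
  calc u * Real.exp (-(a * u)) * (a * Real.exp 1)
      = ((a * u) * Real.exp (-(a * u))) * Real.exp 1 := by ring
    _ ≤ Real.exp (-1 : ℝ) * Real.exp 1 :=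
        mul_le_mul_of_nonneg_right key (Real.exp_pos 1).le
    _ = 1 := he

lemma auxA (α₀ α x : ℝ) (h0 : 0 < α₀) (h01 : α₀ ≤ α) (hx0 : 0 ≤ x) (hx1 : x ≤ 1) :
    x ^ α₀ - x ^ α ≤ (α - α₀) * (1 / (α₀ * Real.exp 1)) := by
  rcases eq_or_lt_of_le hx0 with h | hx
  · rw [← h, Real.zero_rpow h0.ne', Real.zero_rpow (by linarith : α ≠ 0)]
    have : 0 ≤ (α - α₀) * (1 / (α₀ * Real.exp 1)) := mul_nonneg (by linarith) (by positivity)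
    linarith
  · set L := Real.log x with hL
    have hLn : L ≤ 0 := Real.log_nonpos hx0 hx1
    have hx1' : x ^ α₀ = Real.exp (α₀ * L) := by
      rw [Real.rpow_def_of_pos hx, hL, mul_comm]
    have hx2' : x ^ α = Real.exp (α * L) := by
      rw [Real.rpow_def_of_pos hx, hL, mul_comm]
    rw [hx1', hx2']
    have key : Real.exp (α₀ * L) - Real.exp (α * L)
        = Real.exp (α₀ * L) * (1 - Real.exp ((α - α₀) * L)) := by
      rw [mul_sub, mul_one, ← Real.exp_add]; ring_nf
    rw [key]
    have h2 : 1 - Real.exp ((α - α₀) * L) ≤ -((α - α₀) * L) := by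
      have := Real.add_one_le_exp ((α - α₀) * L); linarith
    have h3 : Real.exp (α₀ * L) * (1 - Real.exp ((α - α₀) * L))
        ≤ Real.exp (α₀ * L) * (-((α - α₀) * L)) :=
      mul_le_mul_of_nonneg_left h2 (Real.exp_pos _).le
    have h4 : Real.exp (α₀ * L) * (-((α - α₀) * L))
        = (α - α₀) * ((-L) * Real.exp (-(α₀ * (-L)))) := by ring_nf
    have h5 := aux_ue α₀ (-L) h0 (by linarith)
    calc Real.exp (α₀ * L) * (1 - Real.exp ((α - α₀) * L))
        ≤ (α - α₀) * ((-L) * Real.exp (-(α₀ * (-L)))) := by rw [← h4]; exact h3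
      _ ≤ (α - α₀) * (1 / (α₀ * Real.exp 1)) :=
          mul_le_mul_of_nonneg_left h5 (by linarith)

lemma auxB (α₀ α x : ℝ) (h0 : 0 < α₀) (h01 : α₀ ≤ α) (h1 : α < 1) (hx : 1 ≤ x) :
    x ^ α - x ^ α₀ ≤ (α - α₀) * (x / ((1 - α) * Real.exp 1)) := by
  have hx0 : (0:ℝ) < x := by linarith
  set L := Real.log x with hL
  have hLp : 0 ≤ L := Real.log_nonneg hx
  have hx1' : x ^ α₀ = Real.exp (α₀ * L) := by rw [Real.rpow_def_of_pos hx0, hL, mul_comm]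
  have hx2' : x ^ α = Real.exp (α * L) := by rw [Real.rpow_def_of_pos hx0, hL, mul_comm]
  have hxe : x = Real.exp L := (Real.exp_log hx0).symm
  rw [hx1', hx2']
  have key : Real.exp (α * L) - Real.exp (α₀ * L)
      = Real.exp (α * L) * (1 - Real.exp (-((α - α₀) * L))) := by
    rw [mul_sub, mul_one, ← Real.exp_add]; ring_nf
  rw [key]
  have h2 : 1 - Real.exp (-((α - α₀) * L)) ≤ (α - α₀) * L := by
    have := Real.add_one_le_exp (-((α - α₀) * L)); linarith
  have h3 : Real.exp (α * L) * (1 - Real.exp (-((α - α₀) * L)))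
      ≤ (α - α₀) * (Real.exp (α * L) * L) := by
    have := mul_le_mul_of_nonneg_left h2 (Real.exp_pos (α * L)).le
    nlinarith [this]
  have h4 : Real.exp (α * L) * L = x * (L * Real.exp (-((1 - α) * L))) := by
    have e1 : Real.exp L * (L * Real.exp (-((1 - α) * L)))
        = Real.exp (L + -((1 - α) * L)) * L := by rw [Real.exp_add]; ring
    rw [hxe, e1]; ring_nf
  have h5 := aux_ue (1 - α) L (by linarith) hLp
  calc Real.exp (α * L) * (1 - Real.exp (-((α - α₀) * L)))
      ≤ (α - α₀) * (Real.exp (α * L) * L) := h3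
    _ = (α - α₀) * (x * (L * Real.exp (-((1 - α) * L)))) := by rw [h4]
    _ ≤ (α - α₀) * (x * (1 / ((1 - α) * Real.exp 1))) := by
        apply mul_le_mul_of_nonneg_left _ (by linarith)
        exact mul_le_mul_of_nonneg_left h5 hx0.le
    _ = (α - α₀) * (x / ((1 - α) * Real.exp 1)) := by ring

/-- Lipschitz-type continuity bound for h(α) = ∫ f^α dφ. -/
theorem integral_rpow_continuity_bound
    {X : Type*} [MeasurableSpace X] (φ : Measure X) [IsFiniteMeasure φ]
    (f : X → ℝ) (hf : Measurable f) (hf0 : ∀ x, 0 ≤ f x)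
    (hint : Integrable f φ)
    (α₀ α : ℝ) (h0 : 0 < α₀) (h01 : α₀ ≤ α) (h1 : α < 1) :
    |(∫ x, f x ^ α ∂φ) - ∫ x, f x ^ α₀ ∂φ| ≤
      (α - α₀) *
        max ((∫ x, f x ^ (0 : ℝ) ∂φ) / (α₀ * Real.exp 1))
            ((∫ x, f x ^ (1 : ℝ) ∂φ) / ((1 - α) * Real.exp 1)) := by
  have he : (0:ℝ) < Real.exp 1 := Real.exp_pos 1
  -- integrability of f ^ β for β ∈ (0,1]
  have intRpow : ∀ β : ℝ, 0 < β → β ≤ 1 → Integrable (fun x => f x ^ β) φ := by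
    intro β hβ0 hβ1
    refine Integrable.mono ((integrable_const (1:ℝ)).add hint)
      ((by fun_prop : Measurable fun x => f x ^ β).aestronglyMeasurable) (Filter.Eventually.of_forall fun x => ?_)
    have h1' : 0 ≤ f x ^ β := Real.rpow_nonneg (hf0 x) β
    have h2' : f x ^ β ≤ 1 + f x := by
      rcases le_total (f x) 1 with hle | hge
      · have := Real.rpow_le_one (hf0 x) hle hβ0.le
        linarith [hf0 x]
      · have := Real.rpow_le_rpow_of_exponent_le hge hβ1
        rw [Real.rpow_one] at this; linarith
    simp only [Real.norm_eq_abs, Pi.add_apply, abs_of_nonneg h1',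
      abs_of_nonneg (by linarith [hf0 x] : (0:ℝ) ≤ 1 + f x)]
    exact h2'
  have hIα := intRpow α (lt_of_lt_of_le h0 h01) h1.le
  have hIα₀ := intRpow α₀ h0 (by linarith)
  set s : Set X := {x | f x ≤ 1} with hsdef
  have hs : MeasurableSet s := measurableSet_le hf measurable_const
  -- split integrals
  have splitα := integral_add_compl hs hIα
  have splitα₀ := integral_add_compl hs hIα₀
  set I1 := ∫ x in s, (f x ^ α₀ - f x ^ α) ∂φ with hI1
  set I2 := ∫ x in sᶜ, (f x ^ α - f x ^ α₀) ∂φ with hI2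
  have hI1eq : I1 = (∫ x in s, f x ^ α₀ ∂φ) - ∫ x in s, f x ^ α ∂φ :=
    integral_sub hIα₀.integrableOn hIα.integrableOn
  have hI2eq : I2 = (∫ x in sᶜ, f x ^ α ∂φ) - ∫ x in sᶜ, f x ^ α₀ ∂φ :=
    integral_sub hIα.integrableOn hIα₀.integrableOn
  have hD : (∫ x, f x ^ α ∂φ) - ∫ x, f x ^ α₀ ∂φ = I2 - I1 := by
    rw [hI1eq, hI2eq]; linarith
  -- nonnegativity
  have hI1nn : 0 ≤ I1 := by
    refine setIntegral_nonneg hs fun x hx => ?_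
    rcases eq_or_lt_of_le (hf0 x) with h | h
    · rw [← h, Real.zero_rpow (by linarith : α ≠ 0), Real.zero_rpow h0.ne']; simp
    · have := Real.rpow_le_rpow_of_exponent_ge h hx h01
      linarith
  have hI2nn : 0 ≤ I2 := by
    refine setIntegral_nonneg hs.compl fun x hx => ?_
    have hx1 : 1 ≤ f x := le_of_lt (by simpa [hsdef] using hx)
    have := Real.rpow_le_rpow_of_exponent_le hx1 h01
    linarith
  -- h(0) and h(1)
  have hH0 : (∫ x, f x ^ (0:ℝ) ∂φ) = (φ univ).toReal := by
    simp [Real.rpow_zero, measureReal_def]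
  have hH1 : (∫ x, f x ^ (1:ℝ) ∂φ) = ∫ x, f x ∂φ := by
    simp [Real.rpow_one]
  -- bound I1
  have hI1bd : I1 ≤ (α - α₀) * ((∫ x, f x ^ (0:ℝ) ∂φ) / (α₀ * Real.exp 1)) := by
    have step : I1 ≤ ∫ _x in s, (α - α₀) * (1 / (α₀ * Real.exp 1)) ∂φ := by
      refine setIntegral_mono_on (hIα₀.integrableOn.sub hIα.integrableOn)
        (Iff.mpr integrableOn_const_iff (Or.inr (measure_lt_top φ s))) hs fun x hx => ?_
      exact auxA α₀ α (f x) h0 h01 (hf0 x) hx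
    rw [hH0]
    have : ∫ _x in s, (α - α₀) * (1 / (α₀ * Real.exp 1)) ∂φ
        = (φ s).toReal * ((α - α₀) * (1 / (α₀ * Real.exp 1))) := by
      rw [setIntegral_const]; simp [smul_eq_mul, measureReal_def]
    rw [this] at step
    have hmeas : (φ s).toReal ≤ (φ univ).toReal :=
      ENNReal.toReal_mono (measure_ne_top φ univ) (measure_mono (subset_univ s))
    calc I1 ≤ (φ s).toReal * ((α - α₀) * (1 / (α₀ * Real.exp 1))) := step
      _ ≤ (φ univ).toReal * ((α - α₀) * (1 / (α₀ * Real.exp 1))) :=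
          mul_le_mul_of_nonneg_right hmeas
            (mul_nonneg (by linarith) (by positivity))
      _ = (α - α₀) * ((φ univ).toReal / (α₀ * Real.exp 1)) := by ring
  -- bound I2
  have hI2bd : I2 ≤ (α - α₀) * ((∫ x, f x ^ (1:ℝ) ∂φ) / ((1 - α) * Real.exp 1)) := by
    have step : I2 ≤ ∫ x in sᶜ, ((α - α₀) / ((1 - α) * Real.exp 1)) * f x ∂φ := by
      refine setIntegral_mono_on (hIα.integrableOn.sub hIα₀.integrableOn)
        (hint.integrableOn.const_mul _) hs.compl fun x hx => ?_
      have hx1 : 1 ≤ f x := le_of_lt (by simpa [hsdef] using hx)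
      have := auxB α₀ α (f x) h0 h01 h1 hx1
      calc f x ^ α - f x ^ α₀ ≤ (α - α₀) * (f x / ((1 - α) * Real.exp 1)) := this
        _ = ((α - α₀) / ((1 - α) * Real.exp 1)) * f x := by ring
    rw [hH1]
    have heq : ∫ x in sᶜ, ((α - α₀) / ((1 - α) * Real.exp 1)) * f x ∂φ
        = ((α - α₀) / ((1 - α) * Real.exp 1)) * ∫ x in sᶜ, f x ∂φ :=
      integral_const_mul _ _
    rw [heq] at step
    have hsub : ∫ x in sᶜ, f x ∂φ ≤ ∫ x, f x ∂φ :=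
      setIntegral_le_integral hint (Filter.Eventually.of_forall hf0)
    have hc : 0 ≤ (α - α₀) / ((1 - α) * Real.exp 1) := by
      exact div_nonneg (by linarith) (mul_nonneg (by linarith) (Real.exp_pos 1).le)
    calc I2 ≤ ((α - α₀) / ((1 - α) * Real.exp 1)) * ∫ x in sᶜ, f x ∂φ := step
      _ ≤ ((α - α₀) / ((1 - α) * Real.exp 1)) * ∫ x, f x ∂φ :=
          mul_le_mul_of_nonneg_left hsub hc
      _ = (α - α₀) * ((∫ x, f x ∂φ) / ((1 - α) * Real.exp 1)) := by ring
  -- conclude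
  rw [hD]
  set M := max ((∫ x, f x ^ (0:ℝ) ∂φ) / (α₀ * Real.exp 1))
      ((∫ x, f x ^ (1:ℝ) ∂φ) / ((1 - α) * Real.exp 1)) with hM
  have hB1 : I1 ≤ (α - α₀) * M :=
    le_trans hI1bd (mul_le_mul_of_nonneg_left (le_max_left _ _) (by linarith))
  have hB2 : I2 ≤ (α - α₀) * M :=
    le_trans hI2bd (mul_le_mul_of_nonneg_left (le_max_right _ _) (by linarith))
  rw [abs_le]
  constructor <;> linarith
end

section
/- Let φ be a finite measure and f ≥ 0 measurable with ∫ f dφ < ∞. Then for 0 < α < 1 and measurable A with ∫_A f dφ > 0: ∫_A f dφ − ∫_A f^α dφ ≤ (1−α) ∫_A f log f dφ (with the right side possibly +∞), and ∫_A f^α dφ ≥ (∫_A f dφ) · exp( -((1−α)/∫_A f dφ) ∫_A f log f dφ ) when ∫_A f log f dφ < ∞. -/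
open MeasureTheory Real Filter Set

lemma pointwise_entropy_bound {t α : ℝ} (ht : 0 ≤ t) (hα0 : 0 < α) (hα1 : α < 1) :
    t - t ^ α ≤ (1 - α) * (t * Real.log t) := by
  rcases ht.eq_or_lt with h | h
  · simp [← h, Real.zero_rpow hα0.ne']
  · have h1 : t * Real.exp ((α - 1) * Real.log t) = t ^ α := by
      rw [Real.rpow_def_of_pos h]
      nth_rewrite 1 [← Real.exp_log h]
      rw [← Real.exp_add]
      congr 1
      ring
    have h2 := Real.add_one_le_exp ((α - 1) * Real.log t)
    nlinarith

/-- bounds relating ∫_A f, ∫_A f^α and ∫_A f log f. -/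
theorem integral_rpow_entropy_bounds
    {X : Type*} [MeasurableSpace X] (φ : Measure X) [IsFiniteMeasure φ]
    (f : X → ℝ) (hf : Measurable f) (hf0 : ∀ x, 0 ≤ f x)
    (hint : Integrable f φ)
    (A : Set X) (hA : MeasurableSet A)
    (hApos : 0 < ∫ x in A, f x ∂φ)
    (hent : Integrable (fun x => f x * Real.log (f x)) (φ.restrict A))
    (α : ℝ) (hα0 : 0 < α) (hα1 : α < 1) :
    (∫ x in A, f x ∂φ) - (∫ x in A, f x ^ α ∂φ) ≤
      (1 - α) * ∫ x in A, f x * Real.log (f x) ∂φ ∧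
    (∫ x in A, f x ∂φ) *
        Real.exp (-((1 - α) / ∫ x in A, f x ∂φ) *
          ∫ x in A, f x * Real.log (f x) ∂φ) ≤
      ∫ x in A, f x ^ α ∂φ := by
  have hint' : Integrable f (φ.restrict A) := hint.restrict
  -- integrability of f ^ α
  have hmα : Measurable fun x => f x ^ α := by fun_prop
  have hintα : Integrable (fun x => f x ^ α) (φ.restrict A) := by
    refine Integrable.mono' (g := fun x => 1 + f x)
      ((integrable_const 1).add hint') hmα.aestronglyMeasurable
      (Eventually.of_forall fun x => ?_)
    have h0 : 0 ≤ f x ^ α := Real.rpow_nonneg (hf0 x) α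
    rw [Real.norm_eq_abs, abs_of_nonneg h0]
    rcases le_total (f x) 1 with h | h
    · have := Real.rpow_le_one (hf0 x) h hα0.le
      linarith [hf0 x]
    · have : f x ^ α ≤ f x ^ (1 : ℝ) :=
        Real.rpow_le_rpow_of_exponent_le h hα1.le
      rw [Real.rpow_one] at this
      linarith
  constructor
  · -- first inequality
    rw [← integral_sub hint' hintα, ← integral_const_mul]
    exact integral_mono (hint'.sub hintα) (hent.const_mul _)
      fun x => pointwise_entropy_bound (hf0 x) hα0 hα1
  · -- second inequality, via Jensen
    set S := ∫ x in A, f x ∂φ with hS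
    set E := ∫ x in A, f x * Real.log (f x) ∂φ with hE
    have hw : Measurable fun x => (f x).toNNReal := hf.real_toNNReal
    set ν := (φ.restrict A).withDensity (fun x => ((f x).toNNReal : ENNReal)) with hν
    have hco : ∀ x, ((f x).toNNReal : ℝ) = f x := fun x => Real.coe_toNNReal _ (hf0 x)
    have hνuniv : ν univ = ENNReal.ofReal S := by
      rw [hν, withDensity_apply _ MeasurableSet.univ, Measure.restrict_univ]
      simp_rw [show ∀ a, (((f a).toNNReal : NNReal) : ENNReal) = ENNReal.ofReal (f a)
        from fun a => rfl]
      exact (ofReal_integral_eq_lintegral_ofReal hint' (Eventually.of_forall hf0)).symm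
    have hSnn : 0 ≤ S := hApos.le
    haveI : IsFiniteMeasure ν := ⟨by rw [hνuniv]; exact ENNReal.ofReal_lt_top⟩
    haveI : NeZero ν := ⟨by
      rw [← Measure.measure_univ_ne_zero, hνuniv]
      exact (ENNReal.ofReal_pos.2 hApos).ne'⟩
    -- key pointwise identity
    have hfexp : ∀ x, f x * Real.exp ((α - 1) * Real.log (f x)) = f x ^ α := by
      intro x
      rcases (hf0 x).eq_or_lt with h | h
      · simp [← h, Real.zero_rpow hα0.ne']
      · rw [Real.rpow_def_of_pos h]
        nth_rewrite 1 [← Real.exp_log h]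
        rw [← Real.exp_add]
        congr 1
        ring
    -- integrability with respect to ν
    have hL : Integrable (fun x => (α - 1) * Real.log (f x)) ν := by
      rw [hν, integrable_withDensity_iff_integrable_smul hw]
      refine (hent.const_mul (α - 1)).congr (Eventually.of_forall fun x => ?_)
      simp only [NNReal.smul_def, smul_eq_mul, hco]
      ring
    have hExp : Integrable (fun x => Real.exp ((α - 1) * Real.log (f x))) ν := by
      rw [hν, integrable_withDensity_iff_integrable_smul hw]
      refine hintα.congr (Eventually.of_forall fun x => ?_)
      simp only [NNReal.smul_def, smul_eq_mul, hco]
      exact (hfexp x).symm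
    have jensen := convexOn_exp.map_average_le continuous_exp.continuousOn
      isClosed_univ (Eventually.of_forall fun x => mem_univ _) hL hExp
    -- compute the ν-integrals
    have hintL : ∫ x, (α - 1) * Real.log (f x) ∂ν = (α - 1) * E := by
      rw [hν, integral_withDensity_eq_integral_smul hw]
      simp_rw [NNReal.smul_def, smul_eq_mul, hco]
      rw [hE, ← integral_const_mul]
      exact integral_congr_ae (Eventually.of_forall fun x => by ring)
    have hintE : ∫ x, Real.exp ((α - 1) * Real.log (f x)) ∂ν
        = ∫ x in A, f x ^ α ∂φ := by
      rw [hν, integral_withDensity_eq_integral_smul hw]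
      simp_rw [NNReal.smul_def, smul_eq_mul, hco, hfexp]
    rw [average_eq, average_eq, measureReal_def, hνuniv, ENNReal.toReal_ofReal hSnn,
      hintL, hintE, smul_eq_mul, smul_eq_mul] at jensen
    have harg : S⁻¹ * ((α - 1) * E) = -((1 - α) / S) * E := by
      field_simp
      ring
    rw [harg] at jensen
    calc S * Real.exp (-((1 - α) / S) * E)
        ≤ S * (S⁻¹ * ∫ x in A, f x ^ α ∂φ) := by
          exact mul_le_mul_of_nonneg_left jensen hSnn
      _ = ∫ x in A, f x ^ α ∂φ := by
          field_simp
end
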